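/- arXiv:2404.05064 — 2 statements merged into one kernel-verified Lean document; each statement's English description precedes it below -/
import Mathlib

section
/- Let Ω ⊆ ℝ be a nonempty open interval and let b₁ < b₂ < ... < bₙ be n distinct points, each lying in Ω. Then the functions 1, σ(x - b₁), ..., σ(x - bₙ), where σ(t) = max(0,t), are linearly independent as functions on Ω. -/
theorem relu_linearIndependent_on_interval
    (a b : ℝ) (hab : a < b) (n : ℕ) (bp : Fin n → ℝ)
    (hmono : StrictMono bp) (hmem : ∀ i, bp i ∈ Set.Ioo a b)
    (c₀ : ℝ) (c : Fin n → ℝ)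
    (hzero : ∀ x ∈ Set.Ioo a b, c₀ + ∑ i, c i * max 0 (x - bp i) = 0) :
    c₀ = 0 ∧ ∀ i, c i = 0 := by
  -- first: c₀ = 0
  have hc0 : c₀ = 0 := by
    by_cases hn : n = 0
    · subst hn
      have := hzero ((a+b)/2) ⟨by linarith, by linarith⟩
      simpa using this
    · have h0n : 0 < n := Nat.pos_of_ne_zero hn
      set x := (a + bp ⟨0, h0n⟩)/2 with hx
      have hb0 := hmem ⟨0, h0n⟩
      have hxmem : x ∈ Set.Ioo a b := ⟨by simp only [hx]; linarith [hb0.1], by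
        simp only [hx]; linarith [hb0.1, hb0.2]⟩
      have hzz := hzero x hxmem
      have hsum : ∀ i : Fin n, c i * max 0 (x - bp i) = 0 := by
        intro i
        have : bp ⟨0, h0n⟩ ≤ bp i := hmono.monotone (by simp [Fin.le_def])
        have : x - bp i ≤ 0 := by simp only [hx]; linarith [hb0.1]
        rw [max_eq_left this, mul_zero]
      rw [Finset.sum_congr rfl (fun i _ => hsum i)] at hzz
      simpa using hzz
  refine ⟨hc0, ?_⟩
  have main : ∀ m : ℕ, ∀ k : Fin n, (k : ℕ) < m → c k = 0 := by
    intro m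
    induction m with
    | zero => intro k hk; omega
    | succ m ihm =>
    intro k hkm
    rcases lt_or_eq_of_le (Nat.lt_succ_iff.mp hkm) with h | h
    · exact ihm k h
    have ih : ∀ i : Fin n, i < k → c i = 0 := fun i hi => ihm i (by omega)
    -- upper bound u
    have hbk := hmem k
    by_cases hk1 : (k : ℕ) + 1 < n
    · set u := bp ⟨k+1, hk1⟩ with hu
      have hku : bp k < u := hmono (by simp [Fin.lt_def])
      set x := (bp k + u)/2 with hx
      have hxmem : x ∈ Set.Ioo a b := ⟨by simp only [hx]; linarith [hbk.1, hku],
        by simp only [hx]; linarith [(hmem ⟨k+1, hk1⟩).2, hbk.2]⟩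
      have hzz := hzero x hxmem
      rw [hc0, zero_add] at hzz
      have hsum : ∀ i : Fin n, i ≠ k → c i * max 0 (x - bp i) = 0 := by
        intro i hi
        rcases lt_or_gt_of_ne hi with h | h
        · rw [ih i h, zero_mul]
        · have : u ≤ bp i := hmono.monotone (by simp [Fin.le_def]; omega)
          have : x - bp i ≤ 0 := by simp only [hx]; linarith
          rw [max_eq_left this, mul_zero]
      rw [Finset.sum_eq_single k (fun i _ h => hsum i h) (by simp)] at hzz
      have hpos : x - bp k > 0 := by simp only [hx]; linarith
      rw [max_eq_right hpos.le] at hzz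
      exact (mul_eq_zero.mp hzz).resolve_right (by linarith)
      -- closing
    · -- k is the last index; use points in (bp k, b)
      set x := (bp k + b)/2 with hx
      have hxmem : x ∈ Set.Ioo a b := ⟨by simp only [hx]; linarith [hbk.1, hbk.2],
        by simp only [hx]; linarith [hbk.2]⟩
      have hzz := hzero x hxmem
      rw [hc0, zero_add] at hzz
      have hsum : ∀ i : Fin n, i ≠ k → c i * max 0 (x - bp i) = 0 := by
        intro i hi
        rcases lt_or_gt_of_ne hi with h | h
        · rw [ih i h, zero_mul]
        · exact absurd h (by have := i.isLt; rw [not_lt, Fin.le_def]; omega)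
      rw [Finset.sum_eq_single k (fun i _ h => hsum i h) (by simp)] at hzz
      have hpos : x - bp k > 0 := by simp only [hx]; linarith [hbk.2]
      rw [max_eq_right hpos.le] at hzz
      exact (mul_eq_zero.mp hzz).resolve_right (by linarith)
  exact fun k => main (k+1) k (Nat.lt_succ_self _)
end

section
/- Let Ω ⊆ ℝ be a nonempty open interval and b₁ < b₂ < ... < bₙ distinct points each lying in Ω. Then the functions H(x - b₁), x·H(x - b₁), H(x - b₂), x·H(x - b₂), ..., H(x - bₙ), x·H(x - bₙ) are linearly independent as functions on Ω, where H is the Heaviside step function. -/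
theorem heaviside_linearIndependent_on_interval
    (a b : ℝ) (hab : a < b) (n : ℕ) (bp : Fin n → ℝ)
    (hmono : StrictMono bp) (hmem : ∀ i, bp i ∈ Set.Ioo a b)
    (α β : Fin n → ℝ)
    (hzero : ∀ x ∈ Set.Ioo a b,
      ∑ i, (α i * (if 0 < x - bp i then (1 : ℝ) else 0)
            + β i * (x * (if 0 < x - bp i then (1 : ℝ) else 0))) = 0) :
    (∀ i, α i = 0) ∧ (∀ i, β i = 0) := by
  have key : ∀ i : Fin n,
      (∑ j ∈ Finset.univ.filter (fun j => j ≤ i), α j) = 0 ∧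
      (∑ j ∈ Finset.univ.filter (fun j => j ≤ i), β j) = 0 := by
    intro i
    set Sα := ∑ j ∈ Finset.univ.filter (fun j => j ≤ i), α j with hSα
    set Sβ := ∑ j ∈ Finset.univ.filter (fun j => j ≤ i), β j with hSβ
    set c : ℝ := if h : (i : ℕ) + 1 < n then min b (bp ⟨(i : ℕ) + 1, h⟩) else b with hc
    have hic : bp i < c := by
      by_cases h : (i : ℕ) + 1 < n
      · have h1 : bp i < bp ⟨(i : ℕ) + 1, h⟩ := hmono (by simp [Fin.lt_def])
        simp only [hc, h, dif_pos]
        exact lt_min (hmem i).2 h1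
      · simp only [hc, h, dif_neg, not_false_iff]
        exact (hmem i).2
    have hcb : c ≤ b := by
      by_cases h : (i : ℕ) + 1 < n
      · simp only [hc, h, dif_pos]; exact min_le_left _ _
      · simp only [hc, h, dif_neg, not_false_iff]; exact le_refl _
    have hsum : ∀ x : ℝ, bp i < x → x < c → Sα + Sβ * x = 0 := by
      intro x hx1 hx2
      have hxmem : x ∈ Set.Ioo a b := ⟨lt_trans (hmem i).1 hx1, lt_of_lt_of_le hx2 hcb⟩
      have h0 := hzero x hxmem
      have hiff : ∀ j : Fin n, (0 < x - bp j) ↔ j ≤ i := by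
        intro j
        constructor
        · intro hj
          by_contra hji
          push_neg at hji
          have hji' : (i : ℕ) + 1 ≤ (j : ℕ) := hji
          have hn : (i : ℕ) + 1 < n := lt_of_le_of_lt hji' j.isLt
          have hle : bp ⟨(i : ℕ) + 1, hn⟩ ≤ bp j := hmono.le_iff_le.mpr (by
            simp [Fin.le_def]; exact hji')
          have hc' : c ≤ bp ⟨(i : ℕ) + 1, hn⟩ := by
            simp only [hc, hn, dif_pos]; exact min_le_right _ _
          have : bp j < x := by linarith [sub_pos.mp hj]
          linarith
        · intro hj
          have : bp j ≤ bp i := hmono.le_iff_le.mpr hj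
          simp only [sub_pos]
          linarith
      have hstep : (∑ j, (α j * (if 0 < x - bp j then (1 : ℝ) else 0)
            + β j * (x * (if 0 < x - bp j then (1 : ℝ) else 0))))
          = ∑ j, (if j ≤ i then α j + β j * x else 0) := by
        apply Finset.sum_congr rfl
        intro j _
        by_cases hj : j ≤ i
        · rw [if_pos hj, if_pos ((hiff j).mpr hj)]; ring
        · rw [if_neg hj, if_neg (fun h => hj ((hiff j).mp h))]; ring
      rw [hstep, ← Finset.sum_filter] at h0
      rw [hSα, hSβ, Finset.sum_mul, ← Finset.sum_add_distrib]
      rw [← h0]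
    set x₁ : ℝ := (bp i + c) / 2 with hx₁
    set x₂ : ℝ := (bp i + x₁) / 2 with hx₂
    have hx₁1 : bp i < x₁ := by rw [hx₁]; linarith
    have hx₁2 : x₁ < c := by rw [hx₁]; linarith
    have hx₂1 : bp i < x₂ := by rw [hx₂]; linarith
    have hx₂2 : x₂ < c := by rw [hx₂]; linarith
    have h1 := hsum x₁ hx₁1 hx₁2
    have h2 := hsum x₂ hx₂1 hx₂2
    have hne : x₂ < x₁ := by rw [hx₂]; linarith
    have hβ0 : Sβ = 0 := by
      have hmul : Sβ * (x₁ - x₂) = 0 := by linear_combination h1 - h2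
      rcases mul_eq_zero.mp hmul with h | h
      · exact h
      · linarith
    constructor
    · have := h1; rw [hβ0] at this; linarith
    · exact hβ0
  have main : ∀ (γ : Fin n → ℝ),
      (∀ i : Fin n, (∑ j ∈ Finset.univ.filter (fun j => j ≤ i), γ j) = 0) →
      ∀ i, γ i = 0 := by
    intro γ hγ
    have : ∀ m : ℕ, ∀ i : Fin n, (i : ℕ) = m → γ i = 0 := by
      intro m
      induction m using Nat.strong_induction_on with
      | _ m ih =>
        intro i him
        have hs := hγ i
        rw [Finset.sum_eq_single_of_mem i (by simp)] at hs
        · exact hs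
        · intro j hj hji
          have hji' : j < i := lt_of_le_of_ne (by simpa using hj) hji
          exact ih (j : ℕ) (him ▸ hji') j rfl
    intro i
    exact this (i : ℕ) i rfl
  exact ⟨main α (fun i => (key i).1), main β (fun i => (key i).2)⟩
end
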